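/- (Filipów–Mrożek–Recław–Szuca) Let I be a q⁺ ideal on ℕ containing all finite sets. The following are equivalent: (i) I is Ramsey at ℕ, i.e., for every coloring c : [ℕ]² → {0,1} there is a c-homogeneous set in I⁺; (ii) I is Mon, i.e., for every sequence (xₙ) of real numbers there is A ∈ I⁺ such that (xₙ)_{n∈A}, listed along the increasing enumeration of A, is monotone (possibly eventually constant); (iii) I is FinBW, i.e., for every bounded sequence (xₙ) of real numbers there is A ∈ I⁺ such that (xₙ)_{n∈A} converges. -/
import Mathlib


open Set Filter Topology

def IsIdeal {X : Type*} (I : Set (Set X)) : Prop :=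
  ∅ ∈ I ∧ (Set.univ : Set X) ∉ I ∧ (∀ A B : Set X, A ∈ I → B ∈ I → A ∪ B ∈ I) ∧
    ∀ A B : Set X, A ⊆ B → B ∈ I → A ∈ I

def ContainsFin {X : Type*} (I : Set (Set X)) : Prop := ∀ A : Set X, A.Finite → A ∈ I

/-- `I` is q⁺. -/
def Qplus (I : Set (Set ℕ)) : Prop :=
  ∀ A : Set ℕ, A ∉ I → ∀ F : ℕ → Set ℕ, (∀ n, (F n).Finite) →
    (⋃ n, F n) = A → (∀ m n, m ≠ n → F m ∩ F n = ∅) →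
    ∃ S : Set ℕ, S ∉ I ∧ S ⊆ A ∧ ∀ n, (S ∩ F n).Subsingleton

/-- `I` is Ramsey at `ℕ`: every 2-coloring of pairs has an `I`-positive
homogeneous set. -/
def RamseyAtN (I : Set (Set ℕ)) : Prop :=
  ∀ c : ℕ → ℕ → Bool, (∀ x y, c x y = c y x) →
    ∃ H : Set ℕ, H ∉ I ∧ ∃ b : Bool, ∀ x ∈ H, ∀ y ∈ H, x ≠ y → c x y = b

/-- `I` is Mon: every real sequence has an `I`-positive set along which it is
monotone (nondecreasing or nonincreasing in the order of the indices). -/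
def Mon (I : Set (Set ℕ)) : Prop :=
  ∀ x : ℕ → ℝ, ∃ A : Set ℕ, A ∉ I ∧
    ((∀ m ∈ A, ∀ n ∈ A, m ≤ n → x m ≤ x n) ∨ (∀ m ∈ A, ∀ n ∈ A, m ≤ n → x n ≤ x m))

/-- `I` is FinBW. -/
def FinBW (I : Set (Set ℕ)) : Prop :=
  ∀ x : ℕ → ℝ, (∃ M : ℝ, ∀ n, |x n| ≤ M) →
    ∃ A : Set ℕ, A ∉ I ∧ ∃ l : ℝ, Tendsto (fun n : ↥A => x ↑n) cofinite (nhds l)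

lemma pos_of_superset {I : Set (Set ℕ)} (hI : IsIdeal I) {A B : Set ℕ} (h : A ⊆ B)
    (hA : A ∉ I) : B ∉ I := fun hB => hA (hI.2.2.2 A B h hB)

lemma pos_union {I : Set (Set ℕ)} (hI : IsIdeal I) {A B : Set ℕ} (h : A ∪ B ∉ I) :
    A ∉ I ∨ B ∉ I := by
  by_contra hcon; push_neg at hcon; exact h (hI.2.2.1 A B hcon.1 hcon.2)

lemma pos_infinite {I : Set (Set ℕ)} (hfin : ContainsFin I) {A : Set ℕ} (hA : A ∉ I) :
    A.Infinite := by
  by_contra h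
  rw [Set.not_infinite] at h
  exact hA (hfin A h)

noncomputable def digitSum (N : ℕ) (d : ℕ → Bool) : ℝ :=
  ∑ j ∈ Finset.range N, (if d j then ((1:ℝ)/3)^(j+1) else 0)

lemma tail_bound (a N : ℕ) : ∑ j ∈ Finset.Ico a N, ((1:ℝ)/3)^(j+1) ≤ ((1:ℝ)/3)^a/2 := by
  rcases le_or_gt N a with h | h
  · rw [Finset.Ico_eq_empty (by omega)]
    simp; positivity
  · have hx : ((1:ℝ)/3) ≠ 1 := by norm_num
    have : ∑ j ∈ Finset.Ico a N, ((1:ℝ)/3)^(j+1) = (1/3) * ∑ j ∈ Finset.Ico a N, ((1:ℝ)/3)^j := by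
      rw [Finset.mul_sum]
      apply Finset.sum_congr rfl
      intro j _
      ring
    rw [this, geom_sum_Ico hx h.le]
    have key : (1:ℝ)/3 * ((((1:ℝ)/3)^N - ((1:ℝ)/3)^a)/((1:ℝ)/3 - 1)) = (((1:ℝ)/3)^a - ((1:ℝ)/3)^N)/2 := by
      ring
    rw [key]
    have h1 : (0:ℝ) ≤ (1/3)^N := by positivity
    linarith

lemma digit_sep (d e : ℕ → Bool) (N i : ℕ) (hiN : i < N) (hlow : ∀ j, j < i → d j = e j)
    (hne : d i ≠ e i) : ((1:ℝ)/3)^(i+1)/2 ≤ |digitSum N d - digitSum N e| := by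
  set t : ℕ → ℝ := fun j =>
    (if d j then ((1:ℝ)/3)^(j+1) else 0) - (if e j then ((1:ℝ)/3)^(j+1) else 0) with ht
  have hsum : digitSum N d - digitSum N e = ∑ j ∈ Finset.range N, t j := by
    rw [digitSum, digitSum, ← Finset.sum_sub_distrib]
  have hsplit : ∑ j ∈ Finset.range N, t j
      = (∑ j ∈ Finset.Ico 0 i, t j) + t i + ∑ j ∈ Finset.Ico (i+1) N, t j := by
    rw [Finset.range_eq_Ico, ← Finset.sum_Ico_consecutive t (Nat.zero_le (i+1)) hiN,
      Finset.sum_Ico_succ_top (Nat.zero_le i)]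
  have hzero : ∑ j ∈ Finset.Ico 0 i, t j = 0 := by
    apply Finset.sum_eq_zero
    intro j hj
    rw [Finset.mem_Ico] at hj
    simp [ht, hlow j hj.2]
  have habs_ti : |t i| = ((1:ℝ)/3)^(i+1) := by
    rcases Bool.eq_false_or_eq_true (d i) with h1 | h1 <;>
      rcases Bool.eq_false_or_eq_true (e i) with h2 | h2 <;>
        simp [ht, h1, h2] at hne ⊢ <;> positivity
  have htail : |∑ j ∈ Finset.Ico (i+1) N, t j| ≤ ((1:ℝ)/3)^(i+1)/2 := by
    calc |∑ j ∈ Finset.Ico (i+1) N, t j| ≤ ∑ j ∈ Finset.Ico (i+1) N, |t j| :=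
          Finset.abs_sum_le_sum_abs _ _
      _ ≤ ∑ j ∈ Finset.Ico (i+1) N, ((1:ℝ)/3)^(j+1) := by
          apply Finset.sum_le_sum
          intro j _
          rcases Bool.eq_false_or_eq_true (d j) with h1 | h1 <;>
            rcases Bool.eq_false_or_eq_true (e j) with h2 | h2 <;>
              simp [ht, h1, h2, abs_of_nonneg, abs_neg] <;>
                rw [abs_of_nonneg (by positivity)]
      _ ≤ ((1:ℝ)/3)^(i+1)/2 := tail_bound (i+1) N
  rw [hsum, hsplit, hzero, zero_add]
  set T := ∑ j ∈ Finset.Ico (i+1) N, t j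
  have h1 : |t i| ≤ |t i + T| + |T| := by
    calc |t i| = |(t i + T) + (-T)| := by ring_nf
      _ ≤ |t i + T| + |(-T)| := abs_add_le _ _
      _ = |t i + T| + |T| := by rw [abs_neg]
  rw [habs_ti] at h1
  linarith

lemma digit_agree (d e : ℕ → Bool) (N k : ℕ) (hk : k < N)
    (h : |digitSum N d - digitSum N e| < ((1:ℝ)/3)^(k+1)/2) : ∀ j ≤ k, d j = e j := by
  by_contra hcon
  push_neg at hcon
  obtain ⟨j, hj, hne⟩ := hcon
  have hex : ∃ i, d i ≠ e i := ⟨j, hne⟩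
  have hile : Nat.find hex ≤ j := Nat.find_min' hex hne
  have hsep := digit_sep d e N (Nat.find hex)
    (lt_of_le_of_lt (hile.trans hj) hk)
    (fun j' hj' => not_not.1 (Nat.find_min hex hj')) (Nat.find_spec hex)
  have hle : ((1:ℝ)/3)^(k+1) ≤ ((1:ℝ)/3)^(Nat.find hex + 1) := by
    apply pow_le_pow_of_le_one (by norm_num) (by norm_num)
    omega
  linarith

lemma digitSum_extend (n N : ℕ) (h : n ≤ N) (d : ℕ → Bool) (hd : ∀ j, n ≤ j → d j = false) :
    digitSum N d = digitSum n d := by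
  rw [digitSum, digitSum]
  apply (Finset.sum_subset (Finset.range_subset_range.2 h) _).symm
  intro j _ hj
  rw [Finset.mem_range, not_lt] at hj
  simp [hd j hj]

lemma digitSum_bound (N : ℕ) (d : ℕ → Bool) : |digitSum N d| ≤ 1 := by
  have h0 : 0 ≤ digitSum N d := by
    apply Finset.sum_nonneg
    intro j _
    split <;> positivity
  have h1 : digitSum N d ≤ 1 := by
    calc digitSum N d ≤ ∑ j ∈ Finset.range N, ((1:ℝ)/3)^(j+1) := by
          apply Finset.sum_le_sum
          intro j _
          split
          · exact le_rfl
          · positivity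
      _ ≤ ((1:ℝ)/3)^0/2 := by rw [Finset.range_eq_Ico]; exact tail_bound 0 N
      _ ≤ 1 := by norm_num
  rw [abs_of_nonneg h0]; exact h1

lemma pair_agree (c : ℕ → ℕ → Bool) (n n' k : ℕ) (hkn : k < n) (hkn' : k < n')
    (h : |digitSum n (fun j => decide (j < n) && c j n)
        - digitSum n' (fun j => decide (j < n') && c j n')| < ((1:ℝ)/3)^(k+1)/2) :
    c k n = c k n' := by
  set N := max n n' + 1 with hN
  set d : ℕ → Bool := fun j => decide (j < n) && c j n with hd
  set e : ℕ → Bool := fun j => decide (j < n') && c j n' with he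
  have hdn : digitSum N d = digitSum n d :=
    digitSum_extend n N (by omega) d (fun j hj => by simp [hd]; omega)
  have hen : digitSum N e = digitSum n' e :=
    digitSum_extend n' N (by omega) e (fun j hj => by simp [he]; omega)
  have hk : d k = e k := by
    apply digit_agree d e N k (by omega) _ k le_rfl
    rw [hdn, hen]
    exact h
  simpa [hd, he, hkn, hkn'] using hk

lemma ramsey_to_mon {I : Set (Set ℕ)} (h : RamseyAtN I) : Mon I := by
  intro x
  set c : ℕ → ℕ → Bool := fun m n => decide (x (min m n) ≤ x (max m n)) with hcdef
  obtain ⟨H, hH, b, hb⟩ := h c (fun m n => by simp [hcdef, min_comm, max_comm])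
  refine ⟨H, hH, ?_⟩
  cases b with
  | true =>
    left
    intro m hm n hn hmn
    rcases eq_or_lt_of_le hmn with rfl | hlt
    · exact le_rfl
    · have hcmn := hb m hm n hn (Nat.ne_of_lt hlt)
      rw [hcdef] at hcmn
      simp only [min_eq_left hmn, max_eq_right hmn, decide_eq_true_eq] at hcmn
      exact hcmn
  | false =>
    right
    intro m hm n hn hmn
    rcases eq_or_lt_of_le hmn with rfl | hlt
    · exact le_rfl
    · have hcmn := hb m hm n hn (Nat.ne_of_lt hlt)
      rw [hcdef] at hcmn
      simp only [min_eq_left hmn, max_eq_right hmn, decide_eq_false_iff_not] at hcmn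
      exact le_of_not_ge hcmn

lemma mon_to_finbw {I : Set (Set ℕ)} (hfin : ContainsFin I) (h : Mon I) : FinBW I := by
  intro x hM
  obtain ⟨M, hM⟩ := hM
  obtain ⟨A, hA, hmono⟩ := h x
  refine ⟨A, hA, ?_⟩
  have hinf : A.Infinite := pos_infinite hfin hA
  have hinf' : (setOf (· ∈ A)).Infinite := hinf
  let e : ℕ → ↥A := fun k => ⟨Nat.nth (· ∈ A) k, Nat.nth_mem_of_infinite hinf' k⟩
  have hemono : StrictMono fun k => (e k : ℕ) := fun a b hab => (Nat.nth_lt_nth hinf').2 hab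
  have heinj : Function.Injective e := fun a b hab => by
    have := congrArg Subtype.val hab
    exact hemono.injective this
  have hesurj : Function.Surjective e := by
    rintro ⟨n, hn⟩
    have : n ∈ Set.range (Nat.nth (· ∈ A)) := by
      rw [Nat.range_nth_of_infinite hinf']
      exact hn
    obtain ⟨k, hk⟩ := this
    exact ⟨k, Subtype.ext hk⟩
  have hmap : Filter.map e cofinite = cofinite := by
    rw [← heinj.comap_cofinite_eq, Filter.map_comap_of_surjective hesurj]
  set f : ℕ → ℝ := fun k => x ↑(e k) with hf
  have hkey : ∃ l, Tendsto f atTop (nhds l) := by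
    rcases hmono with hm | hm
    · refine ⟨⨆ k, f k, tendsto_atTop_ciSup ?_ ?_⟩
      · intro a b hab
        exact hm _ (e a).2 _ (e b).2 (hemono.monotone hab)
      · refine ⟨M, ?_⟩
        rintro _ ⟨k, rfl⟩
        exact (abs_le.1 (hM _)).2
    · refine ⟨⨅ k, f k, tendsto_atTop_ciInf ?_ ?_⟩
      · intro a b hab
        exact hm _ (e a).2 _ (e b).2 (hemono.monotone hab)
      · refine ⟨-M, ?_⟩
        rintro _ ⟨k, rfl⟩
        exact (abs_le.1 (hM _)).1
  obtain ⟨l, hl⟩ := hkey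
  refine ⟨l, ?_⟩
  rw [← hmap, Filter.tendsto_map'_iff]
  rw [Nat.cofinite_eq_atTop]
  exact hl

lemma finbw_to_ramsey {I : Set (Set ℕ)} (hI : IsIdeal I) (hfin : ContainsFin I)
    (hq : Qplus I) (h : FinBW I) : RamseyAtN I := by
  intro c hc
  set x : ℕ → ℝ := fun n => digitSum n (fun j => decide (j < n) && c j n) with hx
  obtain ⟨A, hA, l, hl⟩ := h x ⟨1, fun n => digitSum_bound _ _⟩
  have hinfA : A.Infinite := pos_infinite hfin hA
  haveI : Infinite ↥A := hinfA.to_subtype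
  -- digit stabilization
  have hstab : ∀ k : ℕ, ∃ bk : Bool, ∃ Nk : ℕ, ∀ n ∈ A, Nk ≤ n → c k n = bk := by
    intro k
    have hε : (0:ℝ) < ((1:ℝ)/3)^(k+1)/4 := by positivity
    have hev : ∀ᶠ m : ↥A in cofinite, |x ↑m - l| < ((1:ℝ)/3)^(k+1)/4 := by
      have := Metric.tendsto_nhds.mp hl _ hε
      simpa [Real.dist_eq] using this
    have hev2 : ∀ᶠ m : ↥A in cofinite, k < ↑m := by
      rw [Filter.eventually_cofinite]
      apply Set.Finite.subset ((Set.finite_Iic k).preimage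
        (Subtype.val_injective.injOn (s := (Subtype.val ⁻¹' Set.Iic k : Set ↥A))))
      intro m hm
      simp only [Set.mem_setOf_eq, not_lt] at hm
      exact hm
    have hgood := hev.and hev2
    obtain ⟨n₀, hn₀⟩ := hgood.exists
    refine ⟨c k ↑n₀, ?_⟩
    -- extract threshold from cofinite
    have hbadfin : {m : ↥A | ¬(|x ↑m - l| < ((1:ℝ)/3)^(k+1)/4 ∧ k < ↑m)}.Finite := by
      rw [← Filter.eventually_cofinite]
      exact hgood
    have himfin : (Subtype.val '' {m : ↥A | ¬(|x ↑m - l| < ((1:ℝ)/3)^(k+1)/4 ∧ k < ↑m)}).Finite :=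
      hbadfin.image _
    obtain ⟨B, hB⟩ := himfin.bddAbove
    refine ⟨B + 1, ?_⟩
    intro n hn hBn
    set m : ↥A := ⟨n, hn⟩ with hm
    have hmgood : |x ↑m - l| < ((1:ℝ)/3)^(k+1)/4 ∧ k < ↑m := by
      by_contra hcon
      have h1 : (m : ℕ) ≤ B := hB ⟨m, hcon, rfl⟩
      have h2 : (m : ℕ) = n := rfl
      omega
    apply pair_agree c n ↑n₀ k hmgood.2 hn₀.2
    have h1 := hmgood.1
    have h2 := hn₀.1
    show |x ↑m - x ↑n₀| < ((1:ℝ)/3)^(k+1)/2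
    calc |x ↑m - x ↑n₀| = |(x ↑m - l) - (x ↑n₀ - l)| := by ring_nf
      _ ≤ |x ↑m - l| + |x ↑n₀ - l| := abs_sub _ _
      _ < ((1:ℝ)/3)^(k+1)/2 := by linarith
  choose b N hbN using hstab
  -- positive set with constant predicted color
  have hsplitA : A = (A ∩ {n | b n = true}) ∪ (A ∩ {n | b n = false}) := by
    ext n
    simp only [Set.mem_union, Set.mem_inter_iff, Set.mem_setOf_eq]
    cases hbn : b n <;> tauto
  have hBex : ∃ bb : Bool, ∃ B : Set ℕ, B ∉ I ∧ B ⊆ A ∧ ∀ n ∈ B, b n = bb := by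
    rw [hsplitA] at hA
    rcases pos_union hI hA with h1 | h1
    · exact ⟨true, _, h1, Set.inter_subset_left, fun n hn => hn.2⟩
    · exact ⟨false, _, h1, Set.inter_subset_left, fun n hn => hn.2⟩
  obtain ⟨bb, B, hBpos, hBA, hBb⟩ := hBex
  -- threshold blocks
  set t : ℕ → ℕ := fun k => Nat.rec 0 (fun _ tk => tk + 1 + (Finset.range (tk+1)).sup N) k
    with htdef
  have ht0 : t 0 = 0 := rfl
  have htsucc : ∀ k, t (k+1) = t k + 1 + (Finset.range (t k + 1)).sup N := fun k => rfl
  have htlt : ∀ k, t k < t (k+1) := by intro k; rw [htsucc]; omega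
  have htmono : StrictMono t := strictMono_nat_of_lt_succ htlt
  have htkey : ∀ k i, i < t (k+1) → N i < t (k+2) := by
    intro k i hi
    have : N i ≤ (Finset.range (t (k+1) + 1)).sup N :=
      Finset.le_sup (Finset.mem_range.2 (by omega))
    have h2 := htsucc (k+1)
    have h3 : t (k+1+1) = t (k+2) := rfl
    omega
  have htk : ∀ k, k ≤ t k := by
    intro k
    induction k with
    | zero => omega
    | succ n ih => have := htlt n; omega
  set F : ℕ → Set ℕ := fun k => B ∩ Set.Ico (t k) (t (k+1)) with hF
  have hFfin : ∀ k, (F k).Finite := fun k =>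
    (Set.finite_Ico _ _).subset Set.inter_subset_right
  have hFunion : (⋃ k, F k) = B := by
    apply Set.Subset.antisymm
    · exact Set.iUnion_subset fun k => Set.inter_subset_left
    · intro n hn
      have hP0 : t 0 ≤ n := by omega
      set k := Nat.findGreatest (fun j => t j ≤ n) n with hk
      have hPk : t k ≤ n :=
        Nat.findGreatest_spec (P := fun j => t j ≤ n) (Nat.zero_le n) hP0
      have hnlt : n < t (k+1) := by
        by_contra hcon
        push_neg at hcon
        have hk1n : k + 1 ≤ n := le_trans (htk (k+1)) hcon
        have := Nat.le_findGreatest (P := fun j => t j ≤ n) hk1n hcon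
        omega
      exact Set.mem_iUnion.2 ⟨k, hn, hPk, hnlt⟩
  have hFdisj : ∀ m n, m ≠ n → F m ∩ F n = ∅ := by
    intro m n hmn
    rw [Set.eq_empty_iff_forall_notMem]
    rintro a ⟨⟨-, ham⟩, ⟨-, han⟩⟩
    rcases Nat.lt_or_ge m n with hlt | hge
    · have : t (m+1) ≤ t n := htmono.monotone hlt
      rw [Set.mem_Ico] at ham han
      omega
    · have hlt : n < m := by omega
      have : t (n+1) ≤ t m := htmono.monotone hlt
      rw [Set.mem_Ico] at ham han
      omega
  obtain ⟨S, hSpos, hSB, hSsel⟩ := hq B hBpos F hFfin hFunion hFdisj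
  -- parity split
  set Hr : ℕ → Set ℕ := fun r => {n ∈ S | ∃ k, k % 2 = r ∧ n ∈ F k} with hHr
  have hSsplit : S = Hr 0 ∪ Hr 1 := by
    apply Set.Subset.antisymm
    · intro n hn
      have : n ∈ ⋃ k, F k := by rw [hFunion]; exact hSB hn
      obtain ⟨k, hk⟩ := Set.mem_iUnion.1 this
      rcases Nat.even_or_odd k with he | ho
      · exact Or.inl ⟨hn, k, Nat.even_iff.1 he, hk⟩
      · exact Or.inr ⟨hn, k, Nat.odd_iff.1 ho, hk⟩
    · rintro n hn
      rcases hn with ⟨hn, -⟩ | ⟨hn, -⟩ <;> exact hn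
  have hH01 : Hr 0 ∉ I ∨ Hr 1 ∉ I := pos_union hI (hSsplit ▸ hSpos)
  have hrex : ∃ r, Hr r ∉ I := by
    rcases hH01 with h1 | h1
    exacts [⟨0, h1⟩, ⟨1, h1⟩]
  obtain ⟨r, hHpos⟩ := hrex
  refine ⟨Hr r, hHpos, bb, ?_⟩
  have key : ∀ m n, m ∈ Hr r → n ∈ Hr r → m < n → c m n = bb := by
    rintro m n ⟨hmS, km, hkm, hmF⟩ ⟨hnS, kn, hkn, hnF⟩ hmn
    have hmB : m ∈ B := hmF.1
    have hnB : n ∈ B := hnF.1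
    have hmIco := hmF.2
    have hnIco := hnF.2
    rw [Set.mem_Ico] at hmIco hnIco
    have hkmkn : km < kn := by
      rcases Nat.lt_trichotomy km kn with h1 | h1 | h1
      · exact h1
      · exfalso
        subst h1
        have := hSsel km ⟨hmS, hmF⟩ ⟨hnS, hnF⟩
        omega
      · exfalso
        have : t (kn+1) ≤ t km := htmono.monotone h1
        omega
    have h2 : km + 2 ≤ kn := by omega
    have hNm : N m < t (km + 2) := htkey km m hmIco.2
    have htle : t (km+2) ≤ t kn := htmono.monotone h2
    have hNmn : N m ≤ n := by omega
    have hcm := hbN m n (hBA hnB) hNmn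
    rw [hcm, hBb m hmB]
  intro a ha a' ha' haa
  rcases Nat.lt_or_ge a a' with h1 | h1
  · exact key a a' ha ha' h1
  · have h2 : a' < a := by omega
    rw [hc]
    exact key a' a ha' ha h2

/-- Filipów–Mrożek–Recław–Szuca: for a q⁺ ideal, Ramsey at `ℕ`, Mon and FinBW
are equivalent. -/
theorem qplus_ramsey_mon_finbw (I : Set (Set ℕ)) (hI : IsIdeal I)
    (hfin : ContainsFin I) (hq : Qplus I) :
    (RamseyAtN I ↔ Mon I) ∧ (Mon I ↔ FinBW I) := by
  have hRM : RamseyAtN I → Mon I := ramsey_to_mon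
  have hMF : Mon I → FinBW I := mon_to_finbw hfin
  have hFR : FinBW I → RamseyAtN I := finbw_to_ramsey hI hfin hq
  exact ⟨⟨hRM, fun m => hFR (hMF m)⟩, ⟨hMF, fun f => hRM (hFR f)⟩⟩
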